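/- Let r = s, and let A, B ∈ Herm⁺_{n,r} with dim(ker(A)^⊥ ∩ ker(B)) = 0 (all principal angles < π/2). Let d, δ be the geodesic distances on Gr(r,n) and Herm_r^{++}, and let (u,v) be any set of principal vectors between π(A) = ker(A)^⊥ and π(B) = ker(B)^⊥. Then GD_{d,δ}(A,B) equals sqrt( d²(π(A),π(B)) + δ²(M_{A|π(A)}(u,v), M_{B|π(B)}(u,v)) ), and this value is independent of the chosen set of principal vectors. -/

import Mathlib

noncomputable section

open Matrix Finset
open scoped ComplexOrder

abbrev Mat (p : ℕ) := Matrix (Fin p) (Fin p) ℂ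
abbrev Euc (n : ℕ) := EuclideanSpace ℂ (Fin n)

/-- Loewner order: `X ⪯ Y`. -/
def loewner {p : ℕ} (X Y : Mat p) : Prop := (Y - X).PosSemidef

/-- The square root of a positive semidefinite matrix (Mathlib's former `Matrix.PosSemidef.sqrt`,
removed since; restored here with its old definition). -/
def Matrix.PosSemidef.sqrt {p : ℕ} {A : Mat p} (hA : A.PosSemidef) : Mat p :=
  (hA.1.eigenvectorUnitary : Mat p) * diagonal ((↑) ∘ (√·) ∘ hA.1.eigenvalues) *
    (star hA.1.eigenvectorUnitary : Mat p)

theorem Matrix.PosSemidef.posSemidef_sqrt_isHermitian {p : ℕ} {A : Mat p} (hA : A.PosSemidef) :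
    (Matrix.PosSemidef.sqrt hA).IsHermitian := by
  unfold Matrix.IsHermitian Matrix.PosSemidef.sqrt
  simp [Matrix.star_eq_conjTranspose, Matrix.conjTranspose_mul, Matrix.mul_assoc, Function.comp_def]
  rw [show (star fun x => ((√(hA.1.eigenvalues x) : ℝ) : ℂ))
      = fun x => ((√(hA.1.eigenvalues x) : ℝ) : ℂ) from funext fun x => Complex.conj_ofReal _]

/-- Eigenvalues (unsorted) of `X^{-1/2} Y X^{-1/2}`, i.e. of the pencil `X⁻¹ Y`. -/
def relEigs {p : ℕ} {X Y : Mat p} (hX : X.PosDef) (hY : Y.IsHermitian) : Fin p → ℝ :=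
  Matrix.IsHermitian.eigenvalues (A := (Matrix.PosSemidef.sqrt hX.posSemidef)⁻¹ * Y * (Matrix.PosSemidef.sqrt hX.posSemidef)⁻¹) (by
    have hS : ((Matrix.PosSemidef.sqrt hX.posSemidef)).IsHermitian :=
      Matrix.PosSemidef.posSemidef_sqrt_isHermitian hX.posSemidef
    have hSi : ((Matrix.PosSemidef.sqrt hX.posSemidef)⁻¹).IsHermitian := hS.inv
    have h : (Matrix.PosSemidef.sqrt hX.posSemidef)⁻¹ * Y * (Matrix.PosSemidef.sqrt hX.posSemidef)⁻¹
        = (Matrix.PosSemidef.sqrt hX.posSemidef)⁻¹ * Y * ((Matrix.PosSemidef.sqrt hX.posSemidef)⁻¹)ᴴ := by rw [hSi.eq]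
    rw [h]
    exact Matrix.isHermitian_mul_mul_conjTranspose _ hY)

/-- Eigenvalues of a Hermitian matrix, sorted in decreasing order. -/
def eigsDesc {p : ℕ} {Z : Mat p} (hZ : Z.IsHermitian) : Fin p → ℝ :=
  fun i => (hZ.eigenvalues ∘ Tuple.sort hZ.eigenvalues) i.rev

/-- Decreasingly sorted eigenvalues of the pencil `X⁻¹ Y`. -/
def relEigsDesc {p : ℕ} {X Y : Mat p} (hX : X.PosDef) (hY : Y.IsHermitian) : Fin p → ℝ :=
  fun i => ((relEigs hX hY) ∘ Tuple.sort (relEigs hX hY)) i.rev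

/-- Zero-padding of an `a × a` matrix to an `N × N` matrix. -/
def padTo (N : ℕ) {a : ℕ} (A : Mat a) : Mat N :=
  Matrix.of fun i j => if h : (i : ℕ) < a ∧ (j : ℕ) < a then A ⟨i, h.1⟩ ⟨j, h.2⟩ else 0

/-- `diag(P, I)` where `P` is `c × c`. -/
def upPad {s : ℕ} (c : ℕ) (P : Mat c) : Mat s :=
  Matrix.of fun i j =>
    if hi : (i : ℕ) < c then (if hj : (j : ℕ) < c then P ⟨i, hi⟩ ⟨j, hj⟩ else 0)
    else if (i : ℕ) = (j : ℕ) then 1 else 0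

/-- `diag(I_c, T)` where `T` is `(s-c) × (s-c)`. -/
def lowPad {s : ℕ} (c : ℕ) (T : Mat (s - c)) : Mat s :=
  Matrix.of fun i j =>
    if hi : (i : ℕ) < c then (if (i : ℕ) = (j : ℕ) then 1 else 0)
    else if hj : (j : ℕ) < c then 0
    else T ⟨(i : ℕ) - c, by have := i.isLt; omega⟩ ⟨(j : ℕ) - c, by have := j.isLt; omega⟩

/-- The natural isometric inclusion `k^a → k^N` (for `a ≤ N`), as a linear map. -/
def incl (a N : ℕ) : Euc a →ₗ[ℂ] Euc N :=
  Matrix.toEuclideanLin (Matrix.of fun (i : Fin N) (j : Fin a) => if (i : ℕ) = (j : ℕ) then (1 : ℂ) else 0)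

/-- The orthogonal complement of the kernel of (the linear map of) a matrix. -/
def kerPerp {n : ℕ} (A : Mat n) : Submodule ℂ (Euc n) :=
  (LinearMap.ker (Matrix.toEuclideanLin A))ᗮ

/-- Matrix representation `(uᵢ* A uⱼ)` of `A` with respect to a tuple of vectors `u`. -/
def rep {n p : ℕ} (A : Mat n) (u : Fin p → Euc n) : Mat p :=
  Matrix.of fun i j => (inner ℂ (u i) (Matrix.toEuclideanLin A (u j)) : ℂ)

/-- `(u, v)` is a set of principal vectors between `U` and `V` with cosines of principal
angles `σ` (decreasing). -/
def IsPrincipalSystem {N p q : ℕ} (U V : Submodule ℂ (Euc N))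
    (u : Fin p → Euc N) (v : Fin q → Euc N) (σ : Fin (min p q) → ℝ) : Prop :=
  Orthonormal ℂ u ∧ Submodule.span ℂ (Set.range u) = U ∧
  Orthonormal ℂ v ∧ Submodule.span ℂ (Set.range v) = V ∧
  Antitone σ ∧ (∀ i, 0 ≤ σ i) ∧
  ∀ (i : Fin p) (j : Fin q), (inner ℂ (u i) (v j) : ℂ) =
    if h : (i : ℕ) = (j : ℕ) ∧ (i : ℕ) < min p q then ((σ ⟨(i : ℕ), h.2⟩ : ℝ) : ℂ) else 0

/-- Geodesic distance on Grassmannians: square root of the sum of squared principal angles. -/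
def dGr {N : ℕ} (U V : Submodule ℂ (Euc N)) : ℝ :=
  sInf {x | ∃ (u : Fin (Module.finrank ℂ U) → Euc N) (v : Fin (Module.finrank ℂ V) → Euc N)
    (σ : Fin (min (Module.finrank ℂ U) (Module.finrank ℂ V)) → ℝ),
    IsPrincipalSystem U V u v σ ∧ x = Real.sqrt (∑ i, Real.arccos (σ i) ^ 2)}

/-- Generalized Hausdorff value of a function on a subset of a product. -/
def hausd {α β : Type*} (δ : α → β → ℝ) (Z : Set (α × β)) : ℝ :=
  max (sSup {x | ∃ a ∈ Prod.fst '' Z, x = sInf {y | ∃ b, (a, b) ∈ Z ∧ y = δ a b}})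
      (sSup {x | ∃ b ∈ Prod.snd '' Z, x = sInf {y | ∃ a, (a, b) ∈ Z ∧ y = δ a b}})

/-- The set of pairs of matrix representations with respect to all principal vector systems. -/
def ZSet {N p q : ℕ} (A B : Mat N) : Set (Mat p × Mat q) :=
  {z | ∃ u v σ, IsPrincipalSystem (kerPerp A) (kerPerp B) u v σ ∧ z = (rep A u, rep B v)}

/-- The geometric distance `GD_{d,δ}` between PSD matrices of possibly different sizes. -/
def GD {n m p q : ℕ} (d : ∀ N, Submodule ℂ (Euc N) → Submodule ℂ (Euc N) → ℝ)
    (δ : Mat p → Mat q → ℝ) (A : Mat n) (B : Mat m) : ℝ :=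
  Real.sqrt (d (max n m) (kerPerp (padTo (max n m) A)) (kerPerp (padTo (max n m) B)) ^ 2 +
    hausd δ (ZSet (padTo (max n m) A) (padTo (max n m) B)) ^ 2)

end

open Matrix
open scoped ComplexOrder Classical

noncomputable section

/-- The family of Grassmann geodesic distances. -/
def dGrFam : ∀ N, Submodule ℂ (Euc N) → Submodule ℂ (Euc N) → ℝ := fun _ => dGr

/-- The affine-invariant geodesic distance `δ(C,D) = ‖log(C⁻¹D)‖_F` on positive definite
matrices (junk value 0 otherwise). -/
def aiDist {p : ℕ} (C D : Mat p) : ℝ :=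
  if h : C.PosDef ∧ D.IsHermitian then
    Real.sqrt (∑ k, Real.log (relEigs h.1 h.2 k) ^ 2)
  else 0

namespace GDAux

open Polynomial

open scoped MatrixOrder in
lemma psqrt_eq_cfc {p : ℕ} {A : Mat p} (hA : A.PosSemidef) :
    Matrix.PosSemidef.sqrt hA = CFC.sqrt A := by
  rw [CFC.sqrt_eq_cfc, cfc_nnreal_eq_real _ A, hA.1.cfc_eq]
  simp only [IsHermitian.cfc, Matrix.PosSemidef.sqrt]
  congr 3
  funext i
  simp [Real.coe_toNNReal', max_eq_left (hA.eigenvalues_nonneg i)]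

open scoped MatrixOrder in
lemma psqrt_psd {p : ℕ} {A : Mat p} (hA : A.PosSemidef) :
    (Matrix.PosSemidef.sqrt hA).PosSemidef := by
  rw [psqrt_eq_cfc hA]
  exact Matrix.nonneg_iff_posSemidef.mp (CFC.sqrt_nonneg A)

open scoped MatrixOrder in
lemma psqrt_mul_self {p : ℕ} {A : Mat p} (hA : A.PosSemidef) :
    Matrix.PosSemidef.sqrt hA * Matrix.PosSemidef.sqrt hA = A := by
  rw [psqrt_eq_cfc hA]
  exact CFC.sqrt_mul_sqrt_self A hA.nonneg

open scoped MatrixOrder in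
lemma eq_psqrt_of_sq_eq {p : ℕ} {A B : Mat p} (hB : B.PosSemidef) (hA : A.PosSemidef)
    (h : B ^ 2 = A) : B = Matrix.PosSemidef.sqrt hA := by
  rw [psqrt_eq_cfc hA]
  exact (CFC.sqrt_unique (by rw [← sq]; exact h) hB.nonneg).symm

lemma charpoly_conj {p : ℕ} (P M : Mat p) (hP : Pᴴ * P = 1) :
    (Pᴴ * M * P).charpoly = M.charpoly := by
  have hP' : P * Pᴴ = 1 := mul_eq_one_comm.mp hP
  unfold Matrix.charpoly
  have hmap : ∀ X Y : Mat p, (X * Y).map (C : ℂ →+* ℂ[X]) = X.map C * Y.map C :=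
    fun X Y => Matrix.map_mul
  have h1 : charmatrix (Pᴴ * M * P) = (Pᴴ).map (C : ℂ →+* ℂ[X]) * charmatrix M * P.map C := by
    unfold charmatrix
    rw [Matrix.mul_sub, Matrix.sub_mul]
    congr 1
    · rw [mul_assoc]
      have : (Matrix.scalar (Fin p)) (X : ℂ[X]) * P.map C
          = P.map C * (Matrix.scalar (Fin p)) (X : ℂ[X]) :=
        (Matrix.scalar_commute (X : ℂ[X]) (fun r => Commute.all _ r) (P.map C))
      rw [this, ← mul_assoc, ← hmap, hP, Matrix.map_one _ (map_zero C) (map_one C), one_mul]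
    · simp only [RingHom.mapMatrix_apply]
      rw [← hmap, ← hmap]
  rw [h1, det_mul, det_mul, mul_comm, ← mul_assoc, ← det_mul, ← hmap, hP',
    Matrix.map_one _ (map_zero C) (map_one C), det_one, one_mul]

lemma charpoly_diag {p : ℕ} (d : Fin p → ℂ) :
    (Matrix.diagonal d).charpoly = ∏ i, (X - C (d i)) := by
  have : charmatrix (Matrix.diagonal d) = Matrix.diagonal fun i => X - C (d i) := by
    ext i j
    by_cases h : i = j
    · subst h; simp
    · simp [h, charmatrix_apply_ne _ _ _ h, Matrix.diagonal_apply_ne _ h]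
  rw [Matrix.charpoly, this, det_diagonal]

lemma charpoly_herm {p : ℕ} {M : Mat p} (hM : M.IsHermitian) :
    M.charpoly = ∏ i, (X - C ((hM.eigenvalues i : ℝ) : ℂ)) := by
  have h1 : M = ((hM.eigenvectorUnitary : Mat p)ᴴ)ᴴ *
      Matrix.diagonal (RCLike.ofReal ∘ hM.eigenvalues) * (hM.eigenvectorUnitary : Mat p)ᴴ := by
    simpa [Matrix.star_eq_conjTranspose] using hM.spectral_theorem
  conv_lhs => rw [h1]
  have hu : ((hM.eigenvectorUnitary : Mat p)ᴴ)ᴴ * (hM.eigenvectorUnitary : Mat p)ᴴ = 1 := by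
    rw [conjTranspose_conjTranspose]
    have := Matrix.mem_unitaryGroup_iff.mp hM.eigenvectorUnitary.2
    rwa [Matrix.star_eq_conjTranspose] at this
  rw [charpoly_conj _ _ hu, charpoly_diag]
  rfl

lemma multiset_of_prod {p : ℕ} {c d : Fin p → ℝ}
    (h : ∏ i, (X - C ((c i : ℝ) : ℂ)) = ∏ i, (X - C ((d i : ℝ) : ℂ))) :
    Multiset.map c Finset.univ.val = Multiset.map d Finset.univ.val := by
  have e : ∀ (c : Fin p → ℂ), Multiset.map (fun i => X - C (c i)) Finset.univ.val
      = Multiset.map (fun a => X - C a) (Multiset.map c Finset.univ.val) := fun c => by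
    rw [Multiset.map_map]; rfl
  have r2 := congrArg Polynomial.roots h
  rw [Finset.prod_eq_multiset_prod, Finset.prod_eq_multiset_prod, e, e,
    roots_multiset_prod_X_sub_C, roots_multiset_prod_X_sub_C] at r2
  have : Multiset.map (Complex.ofReal) (Multiset.map c Finset.univ.val)
      = Multiset.map (Complex.ofReal) (Multiset.map d Finset.univ.val) := by
    rw [Multiset.map_map, Multiset.map_map]; exact r2
  exact Multiset.map_injective Complex.ofReal_injective this

lemma eig_multiset_conj {p : ℕ} {M : Mat p} (hM : M.IsHermitian) {P : Mat p}
    (hP : Pᴴ * P = 1) (hM' : (Pᴴ * M * P).IsHermitian) :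
    Multiset.map hM'.eigenvalues Finset.univ.val = Multiset.map hM.eigenvalues Finset.univ.val := by
  have h2 := charpoly_herm hM'
  rw [charpoly_conj _ _ hP, charpoly_herm hM] at h2
  exact multiset_of_prod h2.symm

lemma sum_eig_conj {p : ℕ} {M : Mat p} (hM : M.IsHermitian) {P : Mat p}
    (hP : Pᴴ * P = 1) (hM' : (Pᴴ * M * P).IsHermitian) (g : ℝ → ℝ) :
    ∑ i, g (hM'.eigenvalues i) = ∑ i, g (hM.eigenvalues i) := by
  have h := eig_multiset_conj hM hP hM'
  have e : ∀ (c : Fin p → ℝ), Multiset.map (fun i => g (c i)) Finset.univ.val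
      = Multiset.map g (Multiset.map c Finset.univ.val) := fun c => by
    rw [Multiset.map_map]; rfl
  rw [Finset.sum_eq_multiset_sum, Finset.sum_eq_multiset_sum, e, e, h]

lemma antitone_unique {r : ℕ} {a b : Fin r → ℝ} (ha : Antitone a) (hb : Antitone b)
    (h : Multiset.map b Finset.univ.val = Multiset.map a Finset.univ.val) : b = a := by
  haveI : IsAntisymm ℝ (· ≥ ·) := ⟨fun x y h1 h2 => le_antisymm h2 h1⟩
  have huniv : (Finset.univ.val : Multiset (Fin r)) = ↑(List.finRange r) := rfl
  have hperm : (List.ofFn b).Perm (List.ofFn a) := by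
    rw [List.ofFn_eq_map, List.ofFn_eq_map]
    rw [huniv] at h
    exact Multiset.coe_eq_coe.mp (by simpa [Multiset.map_coe] using h)
  have sb : (List.ofFn b).Pairwise (· ≥ ·) :=
    List.pairwise_ofFn.mpr fun i j hij => hb hij.le
  have sa : (List.ofFn a).Pairwise (· ≥ ·) :=
    List.pairwise_ofFn.mpr fun i j hij => ha hij.le
  exact List.ofFn_injective (hperm.eq_of_pairwise (fun _ _ _ _ h1 h2 => le_antisymm h2 h1) sb sa)

lemma diag_conj_unique {r : ℕ} {a b : Fin r → ℝ} {P : Mat r} (hP : Pᴴ * P = 1)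
    (h : Matrix.diagonal (fun i => ((b i : ℝ) : ℂ))
        = Pᴴ * Matrix.diagonal (fun i => ((a i : ℝ) : ℂ)) * P)
    (ha : Antitone a) (hb : Antitone b) : b = a := by
  have h3 : (Matrix.diagonal fun i => ((b i : ℝ) : ℂ)).charpoly
      = (Matrix.diagonal fun i => ((a i : ℝ) : ℂ)).charpoly := by
    rw [h, charpoly_conj _ _ hP]
  rw [charpoly_diag, charpoly_diag] at h3
  exact antitone_unique ha hb (multiset_of_prod h3)

lemma herm_conj {p : ℕ} {M : Mat p} (hM : M.IsHermitian) (P : Mat p) :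
    (Pᴴ * M * P).IsHermitian := by
  have := Matrix.isHermitian_mul_mul_conjTranspose (Pᴴ) hM
  simpa using this

lemma posDef_conj {p : ℕ} {C : Mat p} (hC : C.PosDef) {P : Mat p} (hP : Pᴴ * P = 1) :
    (Pᴴ * C * P).PosDef := by
  refine hC.conjTranspose_mul_mul_same fun x y hxy => ?_
  have h2 := congrArg (fun z => Pᴴ *ᵥ z) hxy
  simpa [Matrix.mulVec_mulVec, hP] using h2

lemma cancel_left {p : ℕ} {P : Mat p} (hP : P * Pᴴ = 1) (X : Mat p) :
    P * (Pᴴ * X) = X := by rw [← Matrix.mul_assoc, hP, Matrix.one_mul]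

lemma cancel_left' {p : ℕ} {P : Mat p} (hP : Pᴴ * P = 1) (X : Mat p) :
    Pᴴ * (P * X) = X := by rw [← Matrix.mul_assoc, hP, Matrix.one_mul]

lemma sqrt_conj {p : ℕ} {C : Mat p} (hC : C.PosDef) {P : Mat p} (hP : Pᴴ * P = 1)
    (hC' : (Pᴴ * C * P).PosDef) :
    hC'.posSemidef.sqrt = Pᴴ * hC.posSemidef.sqrt * P := by
  have hP' : P * Pᴴ = 1 := mul_eq_one_comm.mp hP
  set S := hC.posSemidef.sqrt with hS
  have hSps : (Pᴴ * S * P).PosSemidef :=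
    (psqrt_psd hC.posSemidef).conjTranspose_mul_mul_same P
  have hsq : (Pᴴ * S * P) ^ 2 = Pᴴ * C * P := by
    rw [pow_two]
    calc Pᴴ * S * P * (Pᴴ * S * P) = Pᴴ * S * (P * (Pᴴ * (S * P))) := by
          simp only [Matrix.mul_assoc]
      _ = Pᴴ * S * (S * P) := by rw [cancel_left hP']
      _ = Pᴴ * (S * S) * P := by simp only [Matrix.mul_assoc]
      _ = Pᴴ * C * P := by rw [psqrt_mul_self hC.posSemidef]
  exact (eq_psqrt_of_sq_eq hSps hC'.posSemidef hsq).symm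

lemma sqrt_isUnit_det {p : ℕ} {C : Mat p} (hC : C.PosDef) :
    IsUnit hC.posSemidef.sqrt.det := by
  have h : hC.posSemidef.sqrt.det * hC.posSemidef.sqrt.det = C.det := by
    rw [← Matrix.det_mul, psqrt_mul_self hC.posSemidef]
  have : C.det ≠ 0 := ne_of_gt hC.det_pos
  rw [isUnit_iff_ne_zero]
  intro h0
  rw [h0, mul_zero] at h
  exact this h.symm

lemma inv_conj {p : ℕ} {S : Mat p} (hS : IsUnit S.det) {P : Mat p} (hP : Pᴴ * P = 1) :
    (Pᴴ * S * P)⁻¹ = Pᴴ * S⁻¹ * P := by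
  have hP' : P * Pᴴ = 1 := mul_eq_one_comm.mp hP
  apply Matrix.inv_eq_right_inv
  calc Pᴴ * S * P * (Pᴴ * S⁻¹ * P) = Pᴴ * S * (P * (Pᴴ * (S⁻¹ * P))) := by
        simp only [Matrix.mul_assoc]
    _ = Pᴴ * (S * S⁻¹) * P := by rw [cancel_left hP']; simp only [Matrix.mul_assoc]
    _ = 1 := by rw [Matrix.mul_nonsing_inv _ hS, Matrix.mul_one, hP]

set_option maxHeartbeats 1000000 in
lemma aiDist_conj {p : ℕ} (C D P : Mat p) (hP : Pᴴ * P = 1) :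
    aiDist (Pᴴ * C * P) (Pᴴ * D * P) = aiDist C D := by
  have hP' : P * Pᴴ = 1 := mul_eq_one_comm.mp hP
  by_cases h : C.PosDef ∧ D.IsHermitian
  · have hC' : (Pᴴ * C * P).PosDef := posDef_conj h.1 hP
    have hD' : (Pᴴ * D * P).IsHermitian := herm_conj h.2 P
    rw [aiDist, aiDist, dif_pos h, dif_pos ⟨hC', hD'⟩]
    refine congrArg Real.sqrt ?_
    set S := h.1.posSemidef.sqrt with hS
    have hM'eq : hC'.posSemidef.sqrt⁻¹ * (Pᴴ * D * P) * hC'.posSemidef.sqrt⁻¹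
        = Pᴴ * (S⁻¹ * D * S⁻¹) * P := by
      rw [sqrt_conj h.1 hP hC', inv_conj (sqrt_isUnit_det h.1) hP]
      calc Pᴴ * S⁻¹ * P * (Pᴴ * D * P) * (Pᴴ * S⁻¹ * P)
          = Pᴴ * S⁻¹ * (P * (Pᴴ * (D * (P * (Pᴴ * (S⁻¹ * P)))))) := by
            simp only [Matrix.mul_assoc]
        _ = Pᴴ * S⁻¹ * (D * (S⁻¹ * P)) := by rw [cancel_left hP', cancel_left hP']
        _ = Pᴴ * (S⁻¹ * D * S⁻¹) * P := by simp only [Matrix.mul_assoc]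
    have hMherm : (S⁻¹ * D * S⁻¹).IsHermitian := by
      have hSi : (S⁻¹).IsHermitian := (psqrt_psd h.1.posSemidef).isHermitian.inv
      have : S⁻¹ * D * S⁻¹ = S⁻¹ * D * (S⁻¹)ᴴ := by rw [hSi.eq]
      rw [this]
      exact Matrix.isHermitian_mul_mul_conjTranspose _ h.2
    have congr_eig : ∀ (M₁ M₂ : Mat p) (h₁ : M₁.IsHermitian) (h₂ : M₂.IsHermitian),
        M₁ = M₂ → ∀ g : ℝ → ℝ, ∑ i, g (h₁.eigenvalues i) = ∑ i, g (h₂.eigenvalues i) := by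
      rintro M₁ M₂ h₁ h₂ rfl g; rfl
    unfold relEigs
    refine Eq.trans (congr_eig _ _ _ (herm_conj hMherm P) hM'eq
      (fun t => Real.log t ^ 2)) ?_
    exact sum_eig_conj hMherm hP (herm_conj hMherm P) (fun t => Real.log t ^ 2)
  · have h' : ¬ ((Pᴴ * C * P).PosDef ∧ (Pᴴ * D * P).IsHermitian) := by
      intro hcon
      apply h
      have e1 : P * (Pᴴ * C * P) * Pᴴ = C := by
        calc P * (Pᴴ * C * P) * Pᴴ = P * (Pᴴ * (C * (P * Pᴴ))) := by
              simp only [Matrix.mul_assoc]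
          _ = C := by rw [hP', Matrix.mul_one, cancel_left hP']
      have e2 : P * (Pᴴ * D * P) * Pᴴ = D := by
        calc P * (Pᴴ * D * P) * Pᴴ = P * (Pᴴ * (D * (P * Pᴴ))) := by
              simp only [Matrix.mul_assoc]
          _ = D := by rw [hP', Matrix.mul_one, cancel_left hP']
      have hPP : (Pᴴ)ᴴ * (Pᴴ) = 1 := by rwa [conjTranspose_conjTranspose]
      constructor
      · have := posDef_conj hcon.1 hPP
        rwa [conjTranspose_conjTranspose, e1] at this
      · have := herm_conj hcon.2 (Pᴴ)
        rwa [conjTranspose_conjTranspose, e2] at this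
    rw [aiDist, aiDist, dif_neg h, dif_neg h']

lemma expand_mem {n r : ℕ} {u : Fin r → Euc n} (hu : Orthonormal ℂ u) {w : Euc n}
    (hw : w ∈ Submodule.span ℂ (Set.range u)) :
    ∑ i, (inner ℂ (u i) w : ℂ) • u i = w := by
  induction hw using Submodule.span_induction with
  | mem x h =>
    obtain ⟨j, rfl⟩ := h
    simp only [orthonormal_iff_ite.mp hu, ite_smul, one_smul, zero_smul]
    simp
  | zero => simp
  | add x y hx hy ihx ihy =>
    simp only [inner_add_right, add_smul, Finset.sum_add_distrib, ihx, ihy]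
  | smul a x hx ih =>
    simp only [inner_smul_right, ← smul_smul, ← Finset.smul_sum, ih]

lemma gram_change {n r : ℕ} (u v x y : Fin r → Euc n) (P Q : Mat r)
    (hx : ∀ j, x j = ∑ i, P i j • u i) (hy : ∀ j, y j = ∑ i, Q i j • v i) :
    (Matrix.of fun i j => (inner ℂ (x i) (y j) : ℂ))
      = Pᴴ * (Matrix.of fun i j => (inner ℂ (u i) (v j) : ℂ)) * Q := by
  ext i j
  simp only [Matrix.of_apply, hx, hy, sum_inner, inner_sum, inner_smul_left, inner_smul_right,
    Matrix.mul_apply, Matrix.conjTranspose_apply, Finset.sum_mul, Finset.mul_sum,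
    starRingEnd_apply]
  refine Finset.sum_congr rfl fun k _ => Finset.sum_congr rfl fun l _ => by ring

lemma orth_gram {n r : ℕ} {u : Fin r → Euc n} (hu : Orthonormal ℂ u) :
    (Matrix.of fun i j => (inner ℂ (u i) (u j) : ℂ)) = 1 := by
  ext i j
  simp [orthonormal_iff_ite.mp hu, Matrix.one_apply]

/-- restriction of `σ : Fin (min r r) → ℝ` to `Fin r`. -/
def sig {r : ℕ} (σ : Fin (min r r) → ℝ) : Fin r → ℝ :=
  fun i => σ ⟨i.1, by have := i.isLt; omega⟩

lemma sig_antitone {r : ℕ} {σ : Fin (min r r) → ℝ} (h : Antitone σ) : Antitone (sig σ) :=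
  fun i j hij => h (by simpa [Fin.mk_le_mk] using hij)

lemma sig_nonneg {r : ℕ} {σ : Fin (min r r) → ℝ} (h : ∀ i, 0 ≤ σ i) (i : Fin r) :
    0 ≤ sig σ i := h _

lemma gram_eq_diag {N r : ℕ} {U V : Submodule ℂ (Euc N)} {u v : Fin r → Euc N}
    {σ : Fin (min r r) → ℝ} (hs : IsPrincipalSystem U V u v σ) :
    (Matrix.of fun i j => (inner ℂ (u i) (v j) : ℂ))
      = Matrix.diagonal (fun i => ((sig σ i : ℝ) : ℂ)) := by
  ext i j
  rw [Matrix.of_apply, hs.2.2.2.2.2.2 i j]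
  by_cases h : (i : ℕ) = (j : ℕ)
  · have hij : i = j := Fin.ext h
    subst hij
    rw [dif_pos ⟨rfl, by have := i.isLt; omega⟩, Matrix.diagonal_apply_eq]
    rfl
  · rw [dif_neg (by tauto), Matrix.diagonal_apply_ne _ (fun hc => h (congrArg Fin.val hc))]

lemma sig_ne {N r : ℕ} {U V : Submodule ℂ (Euc N)} {u v : Fin r → Euc N}
    {σ : Fin (min r r) → ℝ} (hs : IsPrincipalSystem U V u v σ)
    (hl : U ⊓ Vᗮ = ⊥) (i : Fin r) : sig σ i ≠ 0 := by
  intro h0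
  have hui : u i ∈ U := hs.2.1 ▸ Submodule.subset_span (Set.mem_range_self i)
  have hperp : u i ∈ Vᗮ := by
    rw [← hs.2.2.2.1, Submodule.mem_orthogonal]
    intro w hw
    induction hw using Submodule.span_induction with
    | mem x hx =>
      obtain ⟨j, rfl⟩ := hx
      have h1 := hs.2.2.2.2.2.2 i j
      have h2 : (inner ℂ (u i) (v j) : ℂ) = 0 := by
        rw [h1]
        by_cases h : (i : ℕ) = (j : ℕ) ∧ (i : ℕ) < min r r
        · rw [dif_pos h]
          have : σ ⟨(i : ℕ), h.2⟩ = sig σ i := rfl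
          rw [this, h0]; simp
        · rw [dif_neg h]
      rw [← inner_conj_symm, h2, map_zero]
    | zero => simp
    | add x y hx hy ihx ihy => rw [inner_add_left, ihx, ihy, add_zero]
    | smul a x hx ih => rw [inner_smul_left, ih, mul_zero]
  have hbot : u i ∈ U ⊓ Vᗮ := ⟨hui, hperp⟩
  rw [hl, Submodule.mem_bot] at hbot
  have h1 := hs.1.1 i
  rw [hbot, norm_zero] at h1
  exact zero_ne_one h1

set_option maxHeartbeats 1000000 in
lemma zset_const {n r : ℕ} (A B : Mat n)
    (hl : kerPerp A ⊓ (kerPerp B)ᗮ = ⊥)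
    {u v : Fin r → Euc n} {σ : Fin (min r r) → ℝ}
    (h1 : IsPrincipalSystem (kerPerp A) (kerPerp B) u v σ)
    {u' v' : Fin r → Euc n} {σ' : Fin (min r r) → ℝ}
    (h2 : IsPrincipalSystem (kerPerp A) (kerPerp B) u' v' σ') :
    aiDist (rep A u') (rep B v') = aiDist (rep A u) (rep B v) := by
  classical
  set P : Mat r := Matrix.of fun i j => (inner ℂ (u i) (u' j) : ℂ) with hPdef
  set Q : Mat r := Matrix.of fun i j => (inner ℂ (v i) (v' j) : ℂ) with hQdef
  have hx : ∀ j, u' j = ∑ i, P i j • u i := by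
    intro j
    have hmem : u' j ∈ Submodule.span ℂ (Set.range u) := by
      rw [h1.2.1, ← h2.2.1]
      exact Submodule.subset_span (Set.mem_range_self j)
    exact (expand_mem h1.1 hmem).symm
  have hy : ∀ j, v' j = ∑ i, Q i j • v i := by
    intro j
    have hmem : v' j ∈ Submodule.span ℂ (Set.range v) := by
      rw [h1.2.2.2.1, ← h2.2.2.2.1]
      exact Submodule.subset_span (Set.mem_range_self j)
    exact (expand_mem h1.2.2.1 hmem).symm
  have hPu : Pᴴ * P = 1 := by
    have hgc := gram_change u u u' u' P P hx hx
    rw [orth_gram h2.1, orth_gram h1.1, Matrix.mul_one] at hgc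
    exact hgc.symm
  have hQu : Qᴴ * Q = 1 := by
    have hgc := gram_change v v v' v' Q Q hy hy
    rw [orth_gram h2.2.2.1, orth_gram h1.2.2.1, Matrix.mul_one] at hgc
    exact hgc.symm
  have hP' : P * Pᴴ = 1 := mul_eq_one_comm.mp hPu
  have hQ' : Q * Qᴴ = 1 := mul_eq_one_comm.mp hQu
  set a : Fin r → ℝ := sig σ with ha
  set b : Fin r → ℝ := sig σ' with hb
  have hGram : Matrix.diagonal (fun i => ((b i : ℝ) : ℂ))
      = Pᴴ * Matrix.diagonal (fun i => ((a i : ℝ) : ℂ)) * Q := by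
    have hgc := gram_change u v u' v' P Q hx hy
    rw [gram_eq_diag h2, gram_eq_diag h1] at hgc
    exact hgc
  have hdH : ∀ c : Fin r → ℝ, (Matrix.diagonal (fun i => ((c i : ℝ) : ℂ)))ᴴ
      = Matrix.diagonal (fun i => ((c i : ℝ) : ℂ)) := by
    intro c
    ext i j
    rcases eq_or_ne i j with rfl | h
    · simp [Matrix.conjTranspose_apply, Complex.conj_ofReal]
    · simp [Matrix.conjTranspose_apply, Matrix.diagonal_apply_ne _ h,
        Matrix.diagonal_apply_ne _ (Ne.symm h)]
  have hdm : ∀ c : Fin r → ℝ, Matrix.diagonal (fun i => ((c i : ℝ) : ℂ))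
      * (Matrix.diagonal (fun i => ((c i : ℝ) : ℂ)))ᴴ
      = Matrix.diagonal (fun i => ((c i ^ 2 : ℝ) : ℂ)) := by
    intro c
    rw [hdH, Matrix.diagonal_mul_diagonal]
    congr 1
    funext i
    push_cast
    ring
  have hD2 : Matrix.diagonal (fun i => ((b i ^ 2 : ℝ) : ℂ))
      = Pᴴ * Matrix.diagonal (fun i => ((a i ^ 2 : ℝ) : ℂ)) * P := by
    have e1 : Matrix.diagonal (fun i => ((b i : ℝ) : ℂ))
        * (Matrix.diagonal (fun i => ((b i : ℝ) : ℂ)))ᴴ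
        = Pᴴ * (Matrix.diagonal (fun i => ((a i : ℝ) : ℂ))
          * (Matrix.diagonal (fun i => ((a i : ℝ) : ℂ)))ᴴ) * P := by
      conv_lhs => rw [hGram]
      rw [Matrix.conjTranspose_mul, Matrix.conjTranspose_mul, Matrix.conjTranspose_conjTranspose]
      simp only [Matrix.mul_assoc]
      rw [cancel_left hQ']
    rw [hdm, hdm] at e1
    rw [e1]
  have hsq : (fun i => b i ^ 2) = (fun i => a i ^ 2) := by
    refine diag_conj_unique hPu hD2 ?_ ?_
    · intro i j hij
      exact pow_le_pow_left₀ (sig_nonneg h1.2.2.2.2.2.1 j) (sig_antitone h1.2.2.2.2.1 hij) 2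
    · intro i j hij
      exact pow_le_pow_left₀ (sig_nonneg h2.2.2.2.2.2.1 j) (sig_antitone h2.2.2.2.2.1 hij) 2
  have hba : b = a := by
    funext i
    exact (pow_left_inj₀ (sig_nonneg h2.2.2.2.2.2.1 i) (sig_nonneg h1.2.2.2.2.2.1 i)
      two_ne_zero).mp (congrFun hsq i)
  rw [hba] at hGram hD2
  have hPcomm2 : P * Matrix.diagonal (fun i => ((a i ^ 2 : ℝ) : ℂ))
      = Matrix.diagonal (fun i => ((a i ^ 2 : ℝ) : ℂ)) * P := by
    conv_lhs => rw [hD2]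
    rw [← Matrix.mul_assoc, ← Matrix.mul_assoc, hP', Matrix.one_mul]
  have hPentry2 : ∀ i j, P i j * ((a j ^ 2 : ℝ) : ℂ) = ((a i ^ 2 : ℝ) : ℂ) * P i j := by
    intro i j
    have h := congrFun (congrFun hPcomm2 i) j
    rwa [Matrix.mul_diagonal, Matrix.diagonal_mul] at h
  have hPentry : ∀ i j, P i j * ((a j : ℝ) : ℂ) = ((a i : ℝ) : ℂ) * P i j := by
    intro i j
    by_cases hc : a i = a j
    · rw [hc, mul_comm]
    · have h2' := hPentry2 i j
      have hP0 : P i j = 0 := by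
        have hzz : P i j * (((a j ^ 2 : ℝ) : ℂ) - ((a i ^ 2 : ℝ) : ℂ)) = 0 := by
          rw [mul_sub, h2']
          ring
        rcases mul_eq_zero.mp hzz with h | h
        · exact h
        · exfalso
          apply hc
          have hre : (a j ^ 2 : ℝ) = (a i ^ 2 : ℝ) := by exact_mod_cast sub_eq_zero.mp h
          exact ((pow_left_inj₀ (sig_nonneg h1.2.2.2.2.2.1 i) (sig_nonneg h1.2.2.2.2.2.1 j)
            two_ne_zero).mp hre.symm)
      rw [hP0, zero_mul, mul_zero]
  have hPD : P * Matrix.diagonal (fun i => ((a i : ℝ) : ℂ))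
      = Matrix.diagonal (fun i => ((a i : ℝ) : ℂ)) * P := by
    ext i j
    rw [Matrix.mul_diagonal, Matrix.diagonal_mul]
    exact hPentry i j
  have hQP : Q = P := by
    have hPG : P * (Pᴴ * Matrix.diagonal (fun i => ((a i : ℝ) : ℂ)) * Q)
        = Matrix.diagonal (fun i => ((a i : ℝ) : ℂ)) * Q := by
      rw [← Matrix.mul_assoc, ← Matrix.mul_assoc, hP', Matrix.one_mul]
    rw [← hGram, hPD] at hPG
    have hentry : ∀ i j, ((a i : ℝ) : ℂ) * Q i j = ((a i : ℝ) : ℂ) * P i j := by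
      intro i j
      have h := congrFun (congrFun hPG.symm i) j
      rwa [Matrix.diagonal_mul, Matrix.diagonal_mul] at h
    ext i j
    have hane : ((a i : ℝ) : ℂ) ≠ 0 := by
      rw [ne_eq, Complex.ofReal_eq_zero]
      exact sig_ne h1 hl i
    exact mul_left_cancel₀ hane (hentry i j)
  have hLA : ∀ j, Matrix.toEuclideanLin A (u' j)
      = ∑ i, P i j • Matrix.toEuclideanLin A (u i) := by
    intro j
    rw [hx j, map_sum]
    exact Finset.sum_congr rfl fun i _ => map_smul _ _ _
  have hLB : ∀ j, Matrix.toEuclideanLin B (v' j)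
      = ∑ i, Q i j • Matrix.toEuclideanLin B (v i) := by
    intro j
    rw [hy j, map_sum]
    exact Finset.sum_congr rfl fun i _ => map_smul _ _ _
  have hrepA : rep A u' = Pᴴ * rep A u * P :=
    gram_change u (fun l => Matrix.toEuclideanLin A (u l)) u'
      (fun j => Matrix.toEuclideanLin A (u' j)) P P hx hLA
  have hrepB : rep B v' = Qᴴ * rep B v * Q :=
    gram_change v (fun l => Matrix.toEuclideanLin B (v l)) v'
      (fun j => Matrix.toEuclideanLin B (v' j)) Q Q hy hLB
  rw [hrepA, hrepB, hQP]
  exact aiDist_conj (rep A u) (rep B v) P hPu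

lemma inner_set_eq {α β : Type*} (δ : α → β → ℝ) (Z : Set (α × β)) (c : ℝ)
    (hc : ∀ z ∈ Z, δ z.1 z.2 = c) {z : α × β} (hz : z ∈ Z) :
    {y | ∃ b, (z.1, b) ∈ Z ∧ y = δ z.1 b} = {c} := by
  ext y
  simp only [Set.mem_setOf_eq, Set.mem_singleton_iff]
  constructor
  · rintro ⟨b, hb, rfl⟩
    exact hc (z.1, b) hb
  · rintro rfl
    exact ⟨z.2, hz, (hc z hz).symm⟩

lemma inner_set_eq' {α β : Type*} (δ : α → β → ℝ) (Z : Set (α × β)) (c : ℝ)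
    (hc : ∀ z ∈ Z, δ z.1 z.2 = c) {z : α × β} (hz : z ∈ Z) :
    {y | ∃ a, (a, z.2) ∈ Z ∧ y = δ a z.2} = {c} := by
  ext y
  simp only [Set.mem_setOf_eq, Set.mem_singleton_iff]
  constructor
  · rintro ⟨a, hb, rfl⟩
    exact hc (a, z.2) hb
  · rintro rfl
    exact ⟨z.1, hz, (hc z hz).symm⟩

lemma hausd_const {α β : Type*} (δ : α → β → ℝ) (Z : Set (α × β)) (c : ℝ)
    (hne : Z.Nonempty) (hc : ∀ z ∈ Z, δ z.1 z.2 = c) : hausd δ Z = c := by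
  have h1 : {x | ∃ a ∈ Prod.fst '' Z, x = sInf {y | ∃ b, (a, b) ∈ Z ∧ y = δ a b}} = {c} := by
    ext x
    simp only [Set.mem_setOf_eq, Set.mem_singleton_iff]
    constructor
    · rintro ⟨a, ⟨z, hz, rfl⟩, rfl⟩
      rw [inner_set_eq δ Z c hc hz, csInf_singleton]
    · rintro rfl
      obtain ⟨z, hz⟩ := hne
      exact ⟨z.1, ⟨z, hz, rfl⟩, by rw [inner_set_eq δ Z _ hc hz, csInf_singleton]⟩
  have h2 : {x | ∃ b ∈ Prod.snd '' Z, x = sInf {y | ∃ a, (a, b) ∈ Z ∧ y = δ a b}} = {c} := by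
    ext x
    simp only [Set.mem_setOf_eq, Set.mem_singleton_iff]
    constructor
    · rintro ⟨a, ⟨z, hz, rfl⟩, rfl⟩
      rw [inner_set_eq' δ Z c hc hz, csInf_singleton]
    · rintro rfl
      obtain ⟨z, hz⟩ := hne
      exact ⟨z.2, ⟨z, hz, rfl⟩, by rw [inner_set_eq' δ Z _ hc hz, csInf_singleton]⟩
  rw [hausd, h1, h2, csSup_singleton, max_self]

lemma padTo_self {n : ℕ} (A : Mat n) : padTo n A = A := by
  ext i j
  rw [padTo, Matrix.of_apply, dif_pos ⟨i.isLt, j.isLt⟩]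

lemma GD_reduce {n r : ℕ} (A B : Mat n) (N : ℕ) (hN : N = n) :
    Real.sqrt (dGrFam N (kerPerp (padTo N A)) (kerPerp (padTo N B)) ^ 2 +
      hausd (aiDist (p := r)) (ZSet (N := N) (p := r) (q := r) (padTo N A) (padTo N B)) ^ 2)
    = Real.sqrt (dGr (kerPerp A) (kerPerp B) ^ 2 +
      hausd (aiDist (p := r)) (ZSet (N := n) (p := r) (q := r) A B) ^ 2) := by
  subst hN
  rw [padTo_self, padTo_self]
  rfl

end GDAux


/-- When `r = s`, `n = m` and all principal angles between `ker(A)ᗮ` and `ker(B)ᗮ` are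
strictly less than `π/2`, the geometric distance is computed by any fixed set of
principal vectors. -/
theorem GD_formula_generic
    {n r : ℕ} (A B : Mat n) (hA : A.PosSemidef) (hB : B.PosSemidef)
    (hrA : A.rank = r) (hrB : B.rank = r)
    (hl : kerPerp A ⊓ (kerPerp B)ᗮ = ⊥) :
    ∀ (u v : Fin r → Euc n) (σ : Fin (min r r) → ℝ),
      IsPrincipalSystem (kerPerp A) (kerPerp B) u v σ →
      GD (n := n) (m := n) dGrFam (aiDist (p := r)) A B =
        Real.sqrt (dGr (kerPerp A) (kerPerp B) ^ 2 + aiDist (rep A u) (rep B v) ^ 2) := by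
  intro u v σ hsys
  have hz : (rep A u, rep B v) ∈ ZSet (N := n) (p := r) (q := r) A B :=
    ⟨u, v, σ, hsys, rfl⟩
  have hconst : ∀ z ∈ ZSet (N := n) (p := r) (q := r) A B,
      aiDist z.1 z.2 = aiDist (rep A u) (rep B v) := by
    rintro z ⟨u', v', σ', hsys', rfl⟩
    exact GDAux.zset_const A B hl hsys hsys'
  have hhaus : hausd aiDist (ZSet (N := n) (p := r) (q := r) A B)
      = aiDist (rep A u) (rep B v) :=
    GDAux.hausd_const _ _ _ ⟨_, hz⟩ hconst
  unfold GD
  rw [GDAux.GD_reduce A B (max n n) (Nat.max_self n), hhaus]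

end
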